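/- arXiv:2301.12523 — 6 statements merged into one kernel-verified Lean document; each statement's English description precedes it below -/
import Mathlib

section
/- Any F_{q^m}-linear rank-metric code C ⊆ F_{q^m}^n with minimum rank distance d satisfies the rank-metric Singleton bound: |C| ≤ q^{min(m(n−d+1), n(m−d+1))}. -/
/-- The rank weight of a vector `x ∈ L^n` over the base field `K`. -/
noncomputable def rankWeight (K : Type*) {L : Type*} [Field K] [Field L] [Algebra K L]
    {n : ℕ} (x : Fin n → L) : ℕ :=
  Module.finrank K (Submodule.span K (Set.range x))

/-- If every coordinate of `x` lies in the span of a finset `S`, then the rank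
weight of `x` is at most the cardinality of `S`. -/
private lemma rankWeight_le_span_card {K L : Type*} [Field K] [Field L] [Algebra K L]
    [FiniteDimensional K L] {n : ℕ} (x : Fin n → L) (S : Finset L)
    (hS : ∀ i, x i ∈ Submodule.span K (S : Set L)) :
    rankWeight K x ≤ S.card := by
  have h1 : Submodule.span K (Set.range x) ≤ Submodule.span K (S : Set L) :=
    Submodule.span_le.2 (by rintro _ ⟨i, rfl⟩; exact hS i)
  calc rankWeight K x ≤ Module.finrank K (Submodule.span K (S : Set L)) :=
        Submodule.finrank_mono h1
    _ ≤ S.card := finrank_span_finset_le_card S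

/-- Singleton bound in the rank metric: an `F_{q^m}`-linear code `C ⊆ F_{q^m}^n`
with minimum rank distance `d` satisfies `|C| ≤ q^{min(m(n-d+1), n(m-d+1))}`. -/
theorem stmt2 (K L : Type*) [Field K] [Fintype K] [Field L] [Algebra K L]
    [FiniteDimensional K L] (n : ℕ) (C : Submodule L (Fin n → L)) (d : ℕ)
    (hd : IsLeast {w | ∃ c ∈ C, c ≠ 0 ∧ w = rankWeight K c} d) :
    Nat.card C ≤
      Fintype.card K ^
        min (Module.finrank K L * (n - d + 1)) (n * (Module.finrank K L - d + 1)) := by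
  classical
  obtain ⟨⟨c₀, hc₀C, hc₀ne, hc₀w⟩, hlb⟩ := hd
  have hFinL : Finite L := Module.finite_of_finite K
  haveI : Fintype L := Fintype.ofFinite L
  set m := Module.finrank K L with hm
  set q := Fintype.card K with hq
  -- basic bounds on d
  have hd1 : 1 ≤ d := by
    rcases Nat.eq_zero_or_pos d with h | h
    · exfalso
      have h0 : Module.finrank K (Submodule.span K (Set.range c₀)) = 0 := by
        have hw0 := hc₀w; unfold rankWeight at hw0; omega
      have hbot : Submodule.span K (Set.range c₀) = ⊥ :=
        Submodule.finrank_eq_zero.mp h0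
      apply hc₀ne
      funext i
      have : c₀ i ∈ Submodule.span K (Set.range c₀) :=
        Submodule.subset_span ⟨i, rfl⟩
      rw [hbot] at this
      simpa using this
    · exact h
  have hdn : d ≤ n := by
    rw [hc₀w]
    unfold rankWeight
    calc Module.finrank K (Submodule.span K (Set.range c₀))
        ≤ (Set.range c₀).toFinset.card := finrank_span_le_card _
      _ ≤ n := by
          rw [Set.toFinset_card]
          simpa using Fintype.card_range_le c₀
  have hdm : d ≤ m := by
    rw [hc₀w]
    exact (Submodule.finrank_le _)
  -- Bound 1 : Nat.card C ≤ q ^ (m * (n - d + 1))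
  have hb1 : Nat.card C ≤ q ^ (m * (n - d + 1)) := by
    obtain ⟨s, -, hscard⟩ :=
      Finset.exists_subset_card_eq (s := (Finset.univ : Finset (Fin n)))
        (n := n - (d - 1)) (by simp only [Finset.card_univ, Fintype.card_fin]; exact Nat.sub_le _ _)
    have hinj : Function.Injective
        (fun (c : C) => (fun i : s => (c : Fin n → L) i.1)) := by
      intro c c' h
      by_contra hne
      set e : Fin n → L := (c : Fin n → L) - c' with he
      have hmem : e ∈ C := sub_mem c.2 c'.2
      have hne' : e ≠ 0 := by
        intro h0
        exact hne (Subtype.ext (sub_eq_zero.mp h0))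
      have hw : d ≤ rankWeight K e := hlb ⟨e, hmem, hne', rfl⟩
      have hle : rankWeight K e ≤ (sᶜ.image e).card := by
        apply rankWeight_le_span_card
        intro i
        by_cases hi : i ∈ s
        · have : e i = 0 := by
            have := congrFun h ⟨i, hi⟩
            simp only [he, Pi.sub_apply]
            simpa [sub_eq_zero] using this
          simp [this]
        · exact Submodule.subset_span (by simp [Finset.mem_image]; exact ⟨i, by simpa using hi, rfl⟩)
      have hcard : (sᶜ.image e).card ≤ d - 1 := by
        calc (sᶜ.image e).card ≤ sᶜ.card := Finset.card_image_le
          _ = n - (n - (d - 1)) := by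
              rw [Finset.card_compl, hscard]; simp
          _ = d - 1 := by omega
      omega
    calc Nat.card C ≤ Nat.card (s → L) := Nat.card_le_card_of_injective _ hinj
      _ = Fintype.card L ^ (n - (d - 1)) := by
          rw [Nat.card_eq_fintype_card]
          have : Fintype.card L ^ (n - (d-1)) = Fintype.card L ^ s.card := by rw [hscard]
          rw [this]
          simp [Fintype.card_fun]
      _ = q ^ (m * (n - d + 1)) := by
          have hL : Fintype.card L = q ^ m := Module.card_eq_pow_finrank (K := K)
          rw [hL, ← pow_mul]
          have hx : n - (d - 1) = n - d + 1 := by omega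
          rw [hx]
  -- Bound 2 : Nat.card C ≤ q ^ (n * (m - d + 1))
  have hb2 : Nat.card C ≤ q ^ (n * (m - d + 1)) := by
    set b := Module.finBasis K L with hb
    obtain ⟨t, -, htcard⟩ :=
      Finset.exists_subset_card_eq (s := (Finset.univ : Finset (Fin m)))
        (n := m - (d - 1)) (by simp only [Finset.card_univ, Fintype.card_fin]; exact Nat.sub_le _ _)
    have hinj : Function.Injective
        (fun (c : C) => (fun (j : t) (i : Fin n) => b.repr ((c : Fin n → L) i) j.1)) := by
      intro c c' h
      by_contra hne
      set e : Fin n → L := (c : Fin n → L) - c' with he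
      have hmem : e ∈ C := sub_mem c.2 c'.2
      have hne' : e ≠ 0 := by
        intro h0
        exact hne (Subtype.ext (sub_eq_zero.mp h0))
      have hw : d ≤ rankWeight K e := hlb ⟨e, hmem, hne', rfl⟩
      have hle : rankWeight K e ≤ ((tᶜ).image b).card := by
        apply rankWeight_le_span_card
        intro i
        have hrepr : ∀ j ∈ t, b.repr (e i) j = 0 := by
          intro j hj
          have hcc' := congrFun (congrFun h ⟨j, hj⟩) i
          simp only [he, Pi.sub_apply, map_sub, Finsupp.sub_apply]
          simp only at hcc'
          rw [hcc', sub_self]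
        have hsupp : ↑(b.repr (e i)).support ⊆ (↑(tᶜ) : Set (Fin m)) := by
          intro j hj
          simp only [Finset.coe_compl, Set.mem_compl_iff, Finset.mem_coe]
          intro hjt
          exact absurd (hrepr j hjt) (by simpa using hj)
        have : e i ∈ Submodule.span K (b '' ↑(tᶜ)) := b.mem_span_image.2 hsupp
        have himg : (b '' ↑(tᶜ)) = ((tᶜ).image b : Finset L) := by
          simp [Finset.coe_image]
        rwa [himg] at this
      have hcard : ((tᶜ).image b).card ≤ d - 1 := by
        calc ((tᶜ).image b).card ≤ (tᶜ).card := Finset.card_image_le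
          _ = m - (m - (d - 1)) := by rw [Finset.card_compl, htcard]; simp
          _ = d - 1 := by omega
      omega
    calc Nat.card C ≤ Nat.card (t → Fin n → K) := Nat.card_le_card_of_injective _ hinj
      _ = (q ^ n) ^ (m - (d - 1)) := by
          rw [Nat.card_eq_fintype_card]
          simp [Fintype.card_fun, htcard]
          rfl
      _ = q ^ (n * (m - d + 1)) := by
          rw [← pow_mul]
          have hx : m - (d - 1) = m - d + 1 := by omega
          rw [hx]
  rcases le_total (m * (n - d + 1)) (n * (m - d + 1)) with h | h
  · simpa [min_eq_left h] using hb1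
  · simpa [min_eq_right h] using hb2
end

section
/- Let C ⊆ F_{q^m}^n be linear, V the F_q-span of the first s elements of a basis B of F_{q^m}, and U the set of positions {(j−1)m+1,...,(j−1)m+s} for each block j. Then shortening the q-ary image of C on the complement of U equals the q-ary image (in the truncated basis) of the subspace subcode C ∩ V^n. -/
/-- Coordinate-wise expansion of `L^n` over `K`, using the basis `B j` on the `j`-th
coordinate. -/
noncomputable def expand (K L : Type*) [Field K] [Field L] [Algebra K L] {m n : ℕ}
    (B : Fin n → Module.Basis (Fin m) K L) : (Fin n → L) →ₗ[K] (Fin n × Fin m → K) :=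
  LinearMap.pi fun p =>
    (Finsupp.lapply p.2).comp (((B p.1).repr.toLinearMap).comp
      ((LinearMap.proj p.1 : (Fin n → L) →ₗ[L] L).restrictScalars K))

/-- Keep, in each block `j`, only the first `s` of the `m` coordinates
(these are the positions in `U`); all other positions are deleted. -/
noncomputable def truncMap (K : Type*) [Field K] {n m s : ℕ} (h : s ≤ m) :
    (Fin n × Fin m → K) →ₗ[K] (Fin n × Fin s → K) :=
  LinearMap.funLeft K K fun p => (p.1, Fin.castLE h p.2)

/-- Shortening the `q`-ary image of `C` on the positions outside
`U = ∪_j {(j-1)m+1,...,(j-1)m+s}` equals the `q`-ary image, in the truncated basis `B_s`,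
of the subspace subcode `C ∩ V^n`, where `V = span(b_1,...,b_s)`. -/
theorem stmt9 (K L : Type*) [Field K] [Fintype K] [Field L] [Algebra K L]
    [FiniteDimensional K L] (m n s : ℕ) (hs : s ≤ m) (hm : Module.finrank K L = m)
    (B : Module.Basis (Fin m) K L) (C : Submodule L (Fin n → L))
    (V : Submodule K L)
    (hV : V = Submodule.span K (Set.range fun i : Fin s => B (Fin.castLE hs i))) :
    ((((C.restrictScalars K).map (expand K L fun _ => B)) ⊓
        ⨅ (p : Fin n × Fin m) (_ : s ≤ (p.2 : ℕ)),
          LinearMap.ker (LinearMap.proj p : (Fin n × Fin m → K) →ₗ[K] K)).map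
      (truncMap K hs)) =
    ((C.restrictScalars K ⊓
        ⨅ j : Fin n, V.comap ((LinearMap.proj j : (Fin n → L) →ₗ[L] L).restrictScalars K)).map
      ((truncMap K hs).comp (expand K L fun _ => B))) := by
  have key : ∀ l : L, l ∈ V ↔ ∀ i : Fin m, s ≤ (i : ℕ) → B.repr l i = 0 := by
    intro l
    rw [hV, show (Set.range fun i : Fin s => B (Fin.castLE hs i))
        = B '' (Set.range (Fin.castLE hs)) by rw [← Set.range_comp]; rfl,
      Module.Basis.mem_span_image]
    constructor
    · intro h i hi
      by_contra h0
      obtain ⟨j, rfl⟩ := h (Finsupp.mem_support_iff.2 h0)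
      simp at hi; omega
    · intro h i hi
      simp only [Finset.mem_coe, Finsupp.mem_support_iff] at hi
      rcases lt_or_ge (i : ℕ) s with h1 | h1
      · exact ⟨⟨i, h1⟩, by ext; simp⟩
      · exact absurd (h i h1) hi
  have hexp : ∀ (x : Fin n → L) (p : Fin n × Fin m),
      expand K L (fun _ => B) x p = B.repr (x p.1) p.2 := fun _ _ => rfl
  ext y
  simp only [Submodule.mem_map, Submodule.mem_inf, Submodule.mem_iInf,
    LinearMap.mem_ker, Submodule.mem_comap, Submodule.restrictScalars_mem,
    LinearMap.proj_apply, LinearMap.coe_restrictScalars, LinearMap.coe_comp,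
    Function.comp_apply]
  constructor
  · rintro ⟨z, ⟨⟨x, hxC, rfl⟩, hz⟩, rfl⟩
    refine ⟨x, ⟨hxC, fun j => ?_⟩, rfl⟩
    rw [key]
    intro i hi
    have := hz (j, i) hi
    rwa [hexp] at this
  · rintro ⟨x, ⟨hxC, hxV⟩, rfl⟩
    refine ⟨expand K L (fun _ => B) x, ⟨⟨x, hxC, rfl⟩, fun p hp => ?_⟩, rfl⟩
    rw [hexp]
    exact (key _).1 (hxV p.1) p.2 hp
end

section
/- If C is an [n,k] code over F_{q^m}, V an s-dimensional F_q-subspace of F_{q^m}, and ns − m(n−k) > 0, then |C ∩ V^n| ≥ q^{ns − m(n−k)}. -/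
/-- Lower bound on the cardinality of a subspace subcode: if `C ⊆ F_{q^m}^n` is
`F_{q^m}`-linear of dimension `k`, `V` is an `s`-dimensional `F_q`-subspace of `F_{q^m}`,
and `ns - m(n-k) > 0`, then `|C ∩ V^n| ≥ q^{ns - m(n-k)}`. -/
theorem stmt12 (K L : Type*) [Field K] [Fintype K] [Field L] [Algebra K L]
    [FiniteDimensional K L] (n k s : ℕ)
    (C : Submodule L (Fin n → L)) (hk : Module.finrank L C = k)
    (V : Submodule K L) (hs : Module.finrank K V = s) (hsm : s ≤ Module.finrank K L)
    (hpos : Module.finrank K L * (n - k) < n * s) :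
    Fintype.card K ^ (n * s - Module.finrank K L * (n - k)) ≤
      Nat.card (C.restrictScalars K ⊓
        ⨅ i : Fin n, V.comap
          ((LinearMap.proj i : (Fin n → L) →ₗ[L] L).restrictScalars K) :
        Submodule K (Fin n → L)) := by
  classical
  have hLfin : Finite L := Module.finite_of_finite K
  set m := Module.finrank K L with hm
  set W : Submodule K (Fin n → L) := ⨅ i : Fin n, V.comap
      ((LinearMap.proj i : (Fin n → L) →ₗ[L] L).restrictScalars K) with hWdef
  have eW : (W : Submodule K (Fin n → L)) ≃ₗ[K] (Fin n → V) :=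
    { toFun := fun x i => ⟨x.1 i, (Submodule.mem_iInf _).1 x.2 i⟩
      invFun := fun f => ⟨fun i => (f i : L), (Submodule.mem_iInf _).2 fun i => (f i).2⟩
      map_add' := fun x y => rfl
      map_smul' := fun c x => rfl
      left_inv := fun x => rfl
      right_inv := fun f => rfl }
  have hWrank : Module.finrank K W = n * s := by
    rw [eW.finrank_eq, Module.finrank_pi_fintype, hs]
    simp [Finset.sum_const, mul_comm]
  have hCrank : Module.finrank K (C.restrictScalars K) = m * k := by
    rw [((Submodule.restrictScalarsEquiv K L _ C).restrictScalars K).finrank_eq, ← hk]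
    exact (Module.finrank_mul_finrank K L C).symm
  have hkn : k ≤ n := by
    rw [← hk]
    simpa using (Submodule.finrank_le C)
  have hamb : Module.finrank K (Fin n → L) = m * n := by
    rw [Module.finrank_pi_fintype]; simp [hm, mul_comm]
  have hsum : Module.finrank K ((C.restrictScalars K) ⊔ W : Submodule K (Fin n → L)) ≤ m * n := by
    rw [← hamb]; exact Submodule.finrank_le _
  have key := Submodule.finrank_sup_add_finrank_inf_eq (C.restrictScalars K) W
  rw [hCrank, hWrank] at key
  have h1 : m * (n - k) = m * n - m * k := by rw [Nat.mul_sub]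
  have h2 : m * k ≤ m * n := Nat.mul_le_mul_left m hkn
  have hinf : n * s - m * (n - k) ≤
      Module.finrank K ((C.restrictScalars K) ⊓ W : Submodule K (Fin n → L)) := by
    omega
  have hcard : Nat.card ((C.restrictScalars K) ⊓ W : Submodule K (Fin n → L)) =
      Fintype.card K ^ Module.finrank K ((C.restrictScalars K) ⊓ W : Submodule K (Fin n → L)) := by
    haveI : Fintype ((C.restrictScalars K) ⊓ W : Submodule K (Fin n → L)) := Fintype.ofFinite _
    rw [Nat.card_eq_fintype_card]
    exact Module.card_eq_pow_finrank (K := K)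
  rw [hcard]
  exact Nat.pow_le_pow_right Fintype.card_pos hinf
end

section
/- The Gabidulin code Gab_k(g) of length n and dimension k over F_{q^m}, defined by evaluating q-polynomials of q-degree < k at F_q-linearly independent points g_1,...,g_n, is an F_{q^m}-linear code of dimension k with minimum rank distance n−k+1 (i.e., it is MRD). -/
/-- The Gabidulin code `Gab_k(g)`: evaluations of `q`-polynomials `∑_{i<k} p_i z^{q^i}`
of `q`-degree `< k` at the points `g_1,...,g_n`; equivalently, the `L`-span of the rows
`(g_1^{q^i},...,g_n^{q^i})`, `0 ≤ i < k`, of the Moore matrix. -/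
noncomputable def gab (K L : Type*) [Field K] [Fintype K] [Field L] [Algebra K L]
    {n : ℕ} (k : ℕ) (g : Fin n → L) : Submodule L (Fin n → L) :=
  Submodule.span L (Set.range fun i : Fin k => fun j => g j ^ Fintype.card K ^ (i : ℕ))

section Aux

variable (K L : Type*) [Field K] [Fintype K] [Field L] [Algebra K L]

open Module Submodule LinearMap

/-- `x ↦ x^{q^i}` as a `K`-linear map. -/
noncomputable def frobPow (i : ℕ) : L →ₗ[K] L where
  toFun x := x ^ Fintype.card K ^ i
  map_add' x y := by
    obtain ⟨p, hp⟩ := CharP.exists K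
    obtain ⟨s, hsp, hcard⟩ := FiniteField.card K p
    haveI : Fact p.Prime := ⟨hsp⟩
    haveI : CharP L p := charP_of_injective_algebraMap (algebraMap K L).injective p
    show (x + y) ^ Fintype.card K ^ i = x ^ Fintype.card K ^ i + y ^ Fintype.card K ^ i
    rw [hcard, ← pow_mul, add_pow_char_pow]
  map_smul' c x := by
    simp only [RingHom.id_apply, Algebra.smul_def, mul_pow, ← map_pow,
      FiniteField.pow_card_pow]

@[simp] lemma frobPow_apply (i : ℕ) (x : L) :
    frobPow K L i x = x ^ Fintype.card K ^ i := rfl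

/-- The `K`-linear map given by the `q`-polynomial with coefficients `p`. -/
noncomputable def geval {k : ℕ} (p : Fin k → L) : L →ₗ[K] L :=
  ∑ i : Fin k, p i • frobPow K L (i : ℕ)

lemma geval_apply {k : ℕ} (p : Fin k → L) (x : L) :
    geval K L p x = ∑ i : Fin k, p i * x ^ Fintype.card K ^ (i : ℕ) := by
  simp [geval, smul_eq_mul]

variable [FiniteDimensional K L]

/-- A nonzero `q`-polynomial of `q`-degree `< k` has kernel of dimension at most `k-1`. -/
lemma finrank_ker_geval_le {k : ℕ} {p : Fin k → L} (hp : p ≠ 0) :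
    Module.finrank K (ker (geval K L p)) ≤ k - 1 := by
  classical
  haveI : Finite L := Module.finite_of_finite K
  haveI : Fintype L := Fintype.ofFinite L
  haveI : Fintype (ker (geval K L p)) := Fintype.ofFinite _
  have hq : 1 < Fintype.card K := Fintype.one_lt_card
  obtain ⟨i, hi⟩ : ∃ i, p i ≠ 0 := Function.ne_iff.mp hp
  have hk0 : 0 < k := i.pos
  set f : Polynomial L :=
    ∑ j : Fin k, Polynomial.C (p j) * Polynomial.X ^ (Fintype.card K ^ (j : ℕ)) with hf
  have hcoeff : f.coeff (Fintype.card K ^ (i : ℕ)) = p i := by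
    rw [hf, Polynomial.finset_sum_coeff]
    rw [Finset.sum_eq_single i]
    · simp [Polynomial.coeff_C_mul_X_pow]
    · intro j _ hji
      rw [Polynomial.coeff_C_mul_X_pow, if_neg]
      intro h
      exact hji (Fin.ext (Nat.pow_right_injective hq h.symm))
    · simp
  have hf0 : f ≠ 0 := fun h => hi (by rw [← hcoeff, h, Polynomial.coeff_zero])
  have hdeg : f.natDegree ≤ Fintype.card K ^ (k - 1) := by
    refine Polynomial.natDegree_sum_le_of_forall_le _ _ fun j _ => ?_
    refine le_trans (Polynomial.natDegree_C_mul_X_pow_le _ _) ?_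
    exact Nat.pow_le_pow_right (le_of_lt hq) (by omega)
  -- every element of the kernel is a root of `f`
  have hroot : ∀ x : ker (geval K L p), (x : L) ∈ f.roots.toFinset := by
    intro x
    rw [Multiset.mem_toFinset, Polynomial.mem_roots hf0]
    have hx : geval K L p (x : L) = 0 := x.2
    rw [geval_apply] at hx
    simp only [Polynomial.IsRoot, hf, Polynomial.eval_finset_sum, Polynomial.eval_mul,
      Polynomial.eval_C, Polynomial.eval_pow, Polynomial.eval_X]
    exact hx
  have hinj : Function.Injective
      (fun x : ker (geval K L p) => (⟨(x : L), hroot x⟩ : f.roots.toFinset)) := by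
    intro a b hab
    simp only [Subtype.mk.injEq] at hab
    exact Subtype.ext hab
  have hcard : Fintype.card (ker (geval K L p)) ≤ Fintype.card K ^ (k - 1) := by
    calc Fintype.card (ker (geval K L p)) ≤ Fintype.card f.roots.toFinset :=
          Fintype.card_le_of_injective _ hinj
      _ = f.roots.toFinset.card := Fintype.card_coe _
      _ ≤ Multiset.card f.roots := f.roots.toFinset_card_le
      _ ≤ f.natDegree := Polynomial.card_roots' f
      _ ≤ Fintype.card K ^ (k - 1) := hdeg
  rw [card_eq_pow_finrank (K := K) (V := ker (geval K L p))] at hcard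
  exact (Nat.pow_le_pow_iff_right hq).mp hcard

/-- If a `q`-polynomial of `q`-degree `< k < n` vanishes on `n` linearly independent
points, it is zero. -/
lemma geval_coeffs_eq_zero {n k : ℕ} (hkn : k < n) {g : Fin n → L}
    (hg : LinearIndependent K g) {p : Fin k → L}
    (h : ∀ j, geval K L p (g j) = 0) : p = 0 := by
  by_contra hp
  have hbound := finrank_ker_geval_le K L hp
  set W := ker (geval K L p)
  have hv : LinearIndependent K (fun j => (⟨g j, h j⟩ : W)) := by
    apply LinearIndependent.of_comp W.subtype
    exact hg
  have hn : n ≤ Module.finrank K W := by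
    simpa using hv.fintype_card_le_finrank
  omega

end Aux

/-- The Gabidulin code `Gab_k(g)` with `F_q`-linearly independent support `g_1,...,g_n`
and `0 < k < n` is `F_{q^m}`-linear of dimension `k` with minimum rank distance
`n - k + 1`, i.e. it is MRD. -/
theorem stmt13 (K L : Type*) [Field K] [Fintype K] [Field L] [Algebra K L]
    [FiniteDimensional K L] (n k : ℕ) (hk0 : 0 < k) (hkn : k < n)
    (g : Fin n → L) (hg : LinearIndependent K g) :
    Module.finrank L (gab K L k g) = k ∧
    IsLeast {w | ∃ c ∈ gab K L k g, c ≠ 0 ∧ w = rankWeight K c} (n - k + 1) := by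
  open Module Submodule LinearMap in
  classical
  set q := Fintype.card K with hqdef
  set r : Fin k → (Fin n → L) := fun i => fun j => g j ^ q ^ (i : ℕ) with hr
  -- codewords are evaluations of q-polynomials
  have hcw : ∀ p : Fin k → L, (∑ i, p i • r i) = fun j => geval K L p (g j) := by
    intro p
    funext j
    rw [geval_apply]
    simp [hr, hqdef]
  have hmem : ∀ c, c ∈ gab K L k g ↔ ∃ p : Fin k → L, c = fun j => geval K L p (g j) := by
    intro c
    rw [gab, mem_span_range_iff_exists_fun]
    constructor
    · rintro ⟨p, hp⟩; exact ⟨p, by rw [← hp, ← hcw]⟩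
    · rintro ⟨p, hp⟩; exact ⟨p, by rw [hcw, hp]⟩
  -- the ambient span V of the evaluation points
  set V := Submodule.span K (Set.range g) with hV
  have hVrank : Module.finrank K V = n := by
    rw [hV, finrank_span_eq_card hg, Fintype.card_fin]
  -- rank weight of a codeword via rank-nullity
  have hweight : ∀ p : Fin k → L,
      rankWeight K (fun j => geval K L p (g j)) +
        Module.finrank K (ker ((geval K L p).domRestrict V)) = n := by
    intro p
    have h1 : Submodule.span K (Set.range fun j => geval K L p (g j)) =
        Submodule.map (geval K L p) V := by
      rw [hV, Submodule.map_span, ← Set.range_comp]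
      rfl
    have h2 := LinearMap.finrank_range_add_finrank_ker ((geval K L p).domRestrict V)
    rw [hVrank] at h2
    rw [rankWeight, h1, ← LinearMap.range_domRestrict]
    exact h2
  -- kernel of restriction bounded by kernel of the q-polynomial
  have hkerle : ∀ p : Fin k → L, p ≠ 0 →
      Module.finrank K (ker ((geval K L p).domRestrict V)) ≤ k - 1 := by
    intro p hp
    rw [← Submodule.finrank_map_subtype_eq V (ker ((geval K L p).domRestrict V))]
    refine le_trans (Submodule.finrank_mono ?_) (finrank_ker_geval_le K L hp)
    rw [LinearMap.ker_domRestrict]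
    exact Submodule.map_comap_le _ _
  -- nonzero codewords come from nonzero coefficient vectors
  have hnz : ∀ p : Fin k → L, (fun j => geval K L p (g j)) ≠ 0 → p ≠ 0 := by
    intro p hc hp
    apply hc
    funext j
    simp [hp, geval_apply]
  -- lower bound on the weight of nonzero codewords
  have hlb : ∀ c ∈ gab K L k g, c ≠ 0 → n - k + 1 ≤ rankWeight K c := by
    intro c hc hc0
    obtain ⟨p, rfl⟩ := (hmem c).mp hc
    have hp := hnz p hc0
    have hw := hweight p
    have := hkerle p hp
    omega
  -- Part 1: dimension k
  have hrows : LinearIndependent L r := by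
    rw [Fintype.linearIndependent_iff]
    intro p hp i
    rw [hcw p] at hp
    have hall : ∀ j, geval K L p (g j) = 0 := fun j => by simpa using congrFun hp j
    have h0 := geval_coeffs_eq_zero K L hkn hg hall
    simp [h0]
  have hdim : Module.finrank L (gab K L k g) = k := by
    rw [gab, ← hr, finrank_span_eq_card hrows, Fintype.card_fin]
  refine ⟨hdim, ?_, ?_⟩
  · -- a codeword of weight exactly n - k + 1
    have hk1n : k - 1 ≤ n := by omega
    set A : Matrix (Fin (k - 1)) (Fin k) L :=
      fun j i => g (Fin.castLE hk1n j) ^ q ^ (i : ℕ) with hA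
    have hker : LinearMap.ker A.mulVecLin ≠ ⊥ := by
      intro hbot
      have hinj : Function.Injective A.mulVecLin := LinearMap.ker_eq_bot.mp hbot
      have hle := LinearMap.finrank_le_finrank_of_injective hinj
      rw [Module.finrank_pi, Module.finrank_pi, Fintype.card_fin, Fintype.card_fin] at hle
      omega
    obtain ⟨p, hpmem, hp0⟩ := (Submodule.ne_bot_iff _).mp hker
    have hvanish : ∀ j : Fin (k - 1), geval K L p (g (Fin.castLE hk1n j)) = 0 := by
      intro j
      have := congrFun (LinearMap.mem_ker.mp hpmem) j
      simp only [Matrix.mulVecLin_apply, Pi.zero_apply] at this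
      rw [geval_apply, ← this]
      simp [Matrix.mulVec, dotProduct, hA, hqdef, mul_comm]
    set c : Fin n → L := fun j => geval K L p (g j) with hc
    have hcmem : c ∈ gab K L k g := (hmem c).mpr ⟨p, rfl⟩
    have hc0 : c ≠ 0 := by
      intro h
      apply hp0
      exact geval_coeffs_eq_zero K L hkn hg (fun j => congrFun h j)
    refine ⟨c, hcmem, hc0, ?_⟩
    rw [hc]
    have hw := hweight p
    have hle := hkerle p hp0
    have hge : k - 1 ≤ Module.finrank K (ker ((geval K L p).domRestrict V)) := by
      set W := ker ((geval K L p).domRestrict V) with hW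
      have hgmem : ∀ j : Fin (k - 1),
          (⟨g (Fin.castLE hk1n j), Submodule.subset_span ⟨_, rfl⟩⟩ : V) ∈ W := by
        intro j
        rw [hW, LinearMap.mem_ker, LinearMap.domRestrict_apply]
        exact hvanish j
      have hv : LinearIndependent K
          (fun j : Fin (k - 1) =>
            (⟨⟨g (Fin.castLE hk1n j), Submodule.subset_span ⟨_, rfl⟩⟩, hgmem j⟩ : W)) := by
        apply LinearIndependent.of_comp (V.subtype ∘ₗ W.subtype)
        have : (⇑(V.subtype ∘ₗ W.subtype) ∘ fun j : Fin (k - 1) =>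
            (⟨⟨g (Fin.castLE hk1n j), Submodule.subset_span ⟨_, rfl⟩⟩, hgmem j⟩ : W)) =
            g ∘ Fin.castLE hk1n := rfl
        rw [this]
        exact hg.comp _ (Fin.castLE_injective hk1n)
      simpa using hv.fintype_card_le_finrank
    omega
  · rintro w ⟨c, hc, hc0, rfl⟩
    exact hlb c hc hc0
end

section
/- Let Gab_k(g) be an [n,k,d] Gabidulin code and W = V_1 × ... × V_n a product of F_q-subspaces of F_{q^m} of dimensions s_1 ≤ ... ≤ s_n forming an inclusion chain with common spanning vectors β_1,...,β_{s_n}. Then every codeword c = (β_1,...,β_{s_n})U of the generalized subspace subcode RGSS_W(Gab_k(g)) determines a vector w = (w_1,...,w_{s_n}) (where w_i = Σ_l u_{i,l} h_l for a dual vector h of rank n) lying in the Gabidulin code B_W with parity-check matrix T = (β_j^{q^{m−i+1}})_{1≤i≤d−1, 1≤j≤s_n}, and this map c ↦ w is injective. -/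
/-- Parent-code lemma: let `C` be an `[n,k,d]` Gabidulin code cut out by the parity checks
`∑_l c_l h_l^{q^{j-1}} = 0` (`j = 1,...,d-1`, `h` of rank weight `n`), and let
`W = V_1 × ⋯ × V_n` with `V_l = span(β_1,...,β_{s_l})`, the `β`'s linearly independent and
the subspaces forming an inclusion chain.  Every codeword `c = (β_1,...,β_{s_n}) U` of
`RGSS_W(C)` determines a vector `w`, `w_i = ∑_l U_{i,l} h_l`, lying in the Gabidulin code
`B_W` with parity-check matrix `T = (β_j^{q^{m-i+1}})_{1 ≤ i ≤ d-1, 1 ≤ j ≤ s_n}`,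
and the map `c ↦ w` is injective. -/
theorem stmt16 (K L : Type*) [Field K] [Fintype K] [Field L] [Algebra K L]
    [FiniteDimensional K L] (m n k d sn : ℕ) (hm : Module.finrank K L = m)
    (hd : d = n - k + 1) (hk0 : 0 < k) (hkn : k < n)
    (h : Fin n → L) (hh : rankWeight K h = n)
    (β : Fin sn → L) (hβ : LinearIndependent K β)
    (s : Fin n → ℕ) (hs : ∀ l, s l ≤ sn)
    (C : Set (Fin n → L))
    (hC : ∀ c, c ∈ C ↔ ∀ j : Fin (d - 1), ∑ l, c l * h l ^ Fintype.card K ^ (j : ℕ) = 0) :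
    (∀ U : Matrix (Fin sn) (Fin n) K,
        (∀ (l : Fin n) (i : Fin sn), s l ≤ (i : ℕ) → U i l = 0) →
        (fun l => ∑ i, U i l • β i) ∈ C →
        ∀ j : Fin (d - 1),
          ∑ i, (∑ l, U i l • h l) * β i ^ Fintype.card K ^ (m - (j : ℕ)) = 0) ∧
    (∀ U U' : Matrix (Fin sn) (Fin n) K,
        (fun i => ∑ l, U i l • h l) = (fun i => ∑ l, U' i l • h l) →
        (fun l => ∑ i, U i l • β i) = (fun l => ∑ i, U' i l • β i)) := by
  have hfin : Finite L := Module.finite_of_finite K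
  have : Fintype L := Fintype.ofFinite L
  set q := Fintype.card K with hqdef
  -- n ≤ m
  have hnm : n ≤ m := by
    rw [← hh, ← hm]; exact (Submodule.span K (Set.range h)).finrank_le
  -- characteristic
  obtain ⟨p, hcp⟩ := CharP.exists K
  haveI := hcp
  obtain ⟨e, hp, hq⟩ := FiniteField.card K p
  haveI : CharP L p := charP_of_injective_algebraMap (algebraMap K L).injective p
  haveI : ExpChar L p := .prime hp
  have hcardL : Fintype.card L = q ^ m := by
    rw [← hm]; exact Module.card_eq_pow_finrank
  constructor
  · intro U _ hcU j
    have hjm : (j : ℕ) ≤ m := by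
      have := j.2
      omega
    have E := (hC _).mp hcU j
    set N := (e : ℕ) * (m - (j : ℕ)) with hN
    have hpN : p ^ N = q ^ (m - (j : ℕ)) := by
      rw [hN, pow_mul, ← hq]
    set F := iterateFrobenius L p N with hF
    have hFdef : ∀ x : L, F x = x ^ q ^ (m - (j : ℕ)) := fun x => by
      rw [hF, iterateFrobenius_def, hpN]
    have hFsmul : ∀ (a : K) (x : L), F (a • x) = a • F x := by
      intro a x
      rw [Algebra.smul_def, map_mul, Algebra.smul_def, hFdef, hFdef, ← map_pow,
        FiniteField.pow_card_pow]
    have key : F (∑ l, (∑ i, U i l • β i) * h l ^ q ^ (j : ℕ)) =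
        ∑ i, (∑ l, U i l • h l) * β i ^ q ^ (m - (j : ℕ)) := by
      rw [map_sum]
      have hterm : ∀ l, F ((∑ i, U i l • β i) * h l ^ q ^ (j : ℕ)) =
          ∑ i, (U i l • h l) * β i ^ q ^ (m - (j : ℕ)) := by
        intro l
        rw [map_mul, map_sum, map_pow]
        have hhl : F (h l) ^ q ^ (j : ℕ) = h l := by
          rw [hFdef, ← pow_mul, ← pow_add, Nat.sub_add_cancel hjm, ← hcardL,
            FiniteField.pow_card]
        rw [hhl, Finset.sum_mul]
        refine Finset.sum_congr rfl fun i _ => ?_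
        rw [hFsmul, hFdef, smul_mul_assoc, smul_mul_assoc, mul_comm]
      rw [Finset.sum_congr rfl fun l _ => hterm l, Finset.sum_comm]
      exact Finset.sum_congr rfl fun i _ => (Finset.sum_mul _ _ _).symm
    rw [E, map_zero] at key
    exact key.symm
  · intro U U' hw
    have hli : LinearIndependent K h := by
      rw [linearIndependent_iff_card_eq_finrank_span]
      simp only [Fintype.card_fin]
      exact hh.symm
    have hUU : U = U' := by
      ext i l
      have hi : ∑ l, U i l • h l = ∑ l, U' i l • h l := congrFun hw i
      have : ∑ l, (U i l - U' i l) • h l = 0 := by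
        simp only [sub_smul, Finset.sum_sub_distrib, hi, sub_self]
      have := (Fintype.linearIndependent_iff.mp hli) _ this l
      exact sub_eq_zero.mp this
    rw [hUU]
end

section
/- The dual of an [n,k] Gabidulin code Gab_k(g) over F_{q^m} (with n ≤ m) is an [n, n−k] Gabidulin code; in particular there exists h ∈ F_{q^m}^n of rank weight n such that the matrix with rows (h_1^{q^{j}},...,h_n^{q^{j}}), j = 0,...,n−k−1, is a parity-check matrix of Gab_k(g). -/
open Module Submodule

/-- The dual code with respect to the standard bilinear form `∑ i, x i * y i`. -/
noncomputable def dualCode {F : Type*} [Field F] {ι : Type*} [Fintype ι]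
    (C : Submodule F (ι → F)) : Submodule F (ι → F) :=
  ⨅ c ∈ C, LinearMap.ker (∑ i, c i • (LinearMap.proj i : (ι → F) →ₗ[F] F))

/-! ### Auxiliary lemmas -/

lemma exists_qpow (K : Type*) {L : Type*} [Field K] [Fintype K] [Field L] [Algebra K L]
    (s : ℕ) : ∃ f : L →+* L, ∀ x : L, f x = x ^ (Fintype.card K) ^ s := by
  obtain ⟨e, hp, hcard⟩ := FiniteField.card K (ringChar K)
  haveI : CharP L (ringChar K) :=
    charP_of_injective_algebraMap (algebraMap K L).injective _
  haveI : ExpChar L (ringChar K) := ExpChar.prime hp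
  refine ⟨iterateFrobenius L (ringChar K) ((e : ℕ) * s), fun x => ?_⟩
  rw [iterateFrobenius_def, hcard, pow_mul]

lemma qpow_algebraMap (K : Type*) {L : Type*} [Field K] [Fintype K] [Field L] [Algebra K L]
    (s : ℕ) (c : K) : (algebraMap K L c) ^ (Fintype.card K) ^ s = algebraMap K L c := by
  rw [← map_pow, FiniteField.pow_card_pow]

/-- Moore matrix rows of a `K`-linearly independent vector are `L`-linearly independent. -/
lemma moore_li (K : Type*) {L : Type*} [Field K] [Fintype K] [Field L] [Algebra K L]
    {n : ℕ} (t : ℕ) (ht : t ≤ n) (g : Fin n → L) (hg : LinearIndependent K g) :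
    LinearIndependent L (fun i : Fin t => fun j : Fin n => g j ^ (Fintype.card K) ^ (i : ℕ)) := by
  classical
  have hq1 : 1 < Fintype.card K := Fintype.one_lt_card
  rw [Fintype.linearIndependent_iff]
  intro lam hlam
  by_contra hne
  push_neg at hne
  obtain ⟨i₀, hi₀⟩ := hne
  set P : Polynomial L := ∑ i : Fin t, Polynomial.C (lam i) * Polynomial.X ^ (Fintype.card K ^ (i : ℕ)) with hP
  have hPeval : ∀ x : L, P.eval x = ∑ i : Fin t, lam i * x ^ Fintype.card K ^ (i : ℕ) := by
    intro x
    rw [hP, Polynomial.eval_finset_sum]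
    simp
  have hPne : P ≠ 0 := by
    intro h0
    apply hi₀
    have hco : P.coeff (Fintype.card K ^ (i₀ : ℕ)) = lam i₀ := by
      rw [hP, Polynomial.finset_sum_coeff]
      rw [Finset.sum_eq_single i₀]
      · simp [Polynomial.coeff_C_mul, Polynomial.coeff_X_pow]
      · intro b _ hb
        simp only [Polynomial.coeff_C_mul, Polynomial.coeff_X_pow]
        rw [if_neg, mul_zero]
        intro hEq
        exact hb (Fin.ext (Nat.pow_right_injective hq1 hEq.symm))
      · intro hnm
        exact absurd (Finset.mem_univ i₀) hnm
    rw [h0] at hco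
    simpa using hco.symm
  have hroot : ∀ x ∈ span K (Set.range g), P.eval x = 0 := by
    intro x hx
    induction hx using Submodule.span_induction with
    | mem x hxm =>
        obtain ⟨j, rfl⟩ := hxm
        rw [hPeval]
        have hj := congrFun hlam j
        simpa using hj
    | zero =>
        rw [hPeval]
        have hz : ∀ i : Fin t, (0 : L) ^ Fintype.card K ^ (i : ℕ) = 0 := fun i =>
          zero_pow (pow_ne_zero _ (by omega))
        simp [hz]
    | add x y hx hy ihx ihy =>
        rw [hPeval] at ihx ihy ⊢
        have hadd : ∀ i : Fin t, (x + y) ^ Fintype.card K ^ (i : ℕ)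
            = x ^ Fintype.card K ^ (i : ℕ) + y ^ Fintype.card K ^ (i : ℕ) := by
          intro i
          obtain ⟨f, hf⟩ := exists_qpow K (L := L) (i : ℕ)
          rw [← hf, ← hf, ← hf, map_add]
        simp only [hadd, mul_add, Finset.sum_add_distrib, ihx, ihy, add_zero]
    | smul c x hx ih =>
        rw [hPeval] at ih ⊢
        have hsm : ∀ i : Fin t, (c • x) ^ Fintype.card K ^ (i : ℕ)
            = algebraMap K L c * x ^ Fintype.card K ^ (i : ℕ) := by
          intro i
          rw [Algebra.smul_def, mul_pow, qpow_algebraMap]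
        simp only [hsm]
        calc (∑ i : Fin t, lam i * ((algebraMap K L) c * x ^ Fintype.card K ^ (i : ℕ)))
            = (algebraMap K L) c * ∑ i : Fin t, lam i * x ^ Fintype.card K ^ (i : ℕ) := by
              rw [Finset.mul_sum]; exact Finset.sum_congr rfl fun i _ => mul_left_comm _ _ _
          _ = 0 := by rw [ih, mul_zero]
  haveI : FiniteDimensional K (span K (Set.range g)) :=
    FiniteDimensional.span_of_finite K (Set.finite_range g)
  haveI : Finite (span K (Set.range g)) := Module.finite_of_finite K
  haveI : Fintype (span K (Set.range g)) := Fintype.ofFinite _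
  have hcardS : Fintype.card (span K (Set.range g)) = Fintype.card K ^ n := by
    rw [card_eq_pow_finrank (K := K) (V := span K (Set.range g)),
      finrank_span_eq_card hg, Fintype.card_fin]
  have hle1 : Fintype.card (span K (Set.range g)) ≤ P.roots.toFinset.card := by
    rw [← Fintype.card_coe P.roots.toFinset]
    refine Fintype.card_le_of_injective
      (fun x => ⟨(x : L), ?_⟩) ?_
    · rw [Multiset.mem_toFinset, Polynomial.mem_roots hPne]
      exact hroot x x.2
    · intro a b hab
      have : (a : L) = b := by
        have := congrArg (Subtype.val : {z // z ∈ P.roots.toFinset} → L) hab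
        simpa using this
      exact Subtype.ext this
  have hle2 : P.roots.toFinset.card ≤ P.natDegree :=
    (Multiset.toFinset_card_le _).trans (Polynomial.card_roots' P)
  have hdeg : P.natDegree ≤ Fintype.card K ^ (n - 1) := by
    rw [hP]
    refine Polynomial.natDegree_sum_le_of_forall_le _ _ fun i _ => ?_
    refine (Polynomial.natDegree_C_mul_X_pow_le _ _).trans ?_
    refine Nat.pow_le_pow_right (by omega) ?_
    have := i.2
    omega
  have hn1 : 1 ≤ n := le_trans (Nat.succ_le_of_lt (Nat.lt_of_le_of_lt (Nat.zero_le _) i₀.2)) ht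
  have hlt : Fintype.card K ^ (n - 1) < Fintype.card K ^ n :=
    Nat.pow_lt_pow_right hq1 (by omega)
  omega

/-! ### The standard bilinear form -/

noncomputable def stdB (F : Type*) [Field F] (ι : Type*) [Fintype ι] :
    LinearMap.BilinForm F (ι → F) :=
  LinearMap.mk₂ F (fun x y => ∑ i, x i * y i)
    (fun x x' y => by simp [add_mul, Finset.sum_add_distrib])
    (fun a x y => by simp [Finset.mul_sum, mul_assoc])
    (fun x y y' => by simp [mul_add, Finset.sum_add_distrib])
    (fun a x y => by simp [Finset.mul_sum, mul_left_comm])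

lemma stdB_apply {F : Type*} [Field F] {ι : Type*} [Fintype ι] (x y : ι → F) :
    stdB F ι x y = ∑ i, x i * y i := rfl

lemma stdB_flip_apply {F : Type*} [Field F] {ι : Type*} [Fintype ι] (x y : ι → F) :
    (stdB F ι).flip x y = stdB F ι y x := rfl

lemma stdB_refl {F : Type*} [Field F] {ι : Type*} [Fintype ι] :
    (stdB F ι).IsRefl := by
  intro x y h
  rw [stdB_apply] at h ⊢
  rw [← h]
  exact Finset.sum_congr rfl fun i _ => mul_comm _ _

lemma stdB_nondeg {F : Type*} [Field F] {ι : Type*} [Fintype ι] [DecidableEq ι] :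
    (stdB F ι).Nondegenerate := by
  refine ⟨?_, ?_⟩ <;> intro x hx <;> funext j <;> have h := hx (Pi.single j 1) <;>
    rw [stdB_apply] at h <;>
    simpa [Pi.single_apply, mul_ite, ite_mul, Finset.sum_ite_eq, Finset.sum_ite_eq'] using h

lemma dualCode_eq_orth {F : Type*} [Field F] {ι : Type*} [Fintype ι]
    (C : Submodule F (ι → F)) : dualCode C = (stdB F ι).orthogonal C := by
  ext x
  simp only [dualCode, Submodule.mem_iInf, LinearMap.mem_ker,
    LinearMap.BilinForm.mem_orthogonal_iff, LinearMap.BilinForm.isOrtho_def,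
    LinearMap.sum_apply, LinearMap.smul_apply, LinearMap.proj_apply, smul_eq_mul,
    stdB_apply]

lemma finrank_dualCode {F : Type*} [Field F] {n : ℕ}
    (C : Submodule F (Fin n → F)) :
    finrank F (dualCode C) = n - finrank F C := by
  rw [dualCode_eq_orth,
    LinearMap.BilinForm.finrank_orthogonal stdB_nondeg,
    Module.finrank_fin_fun]

/-! ### Main theorem -/

/-- The dual of an `[n,k]` Gabidulin code (with `n ≤ m`) is an `[n, n-k]` Gabidulin code:
there exists `h ∈ F_{q^m}^n` of rank weight `n` such that the Moore matrix of `h` with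
`n - k` rows is a parity-check matrix of `Gab_k(g)`. -/
theorem stmt19 (K L : Type*) [Field K] [Fintype K] [Field L] [Algebra K L]
    [FiniteDimensional K L] (n k : ℕ) (hk0 : 0 < k) (hkn : k < n)
    (hn : n ≤ Module.finrank K L)
    (g : Fin n → L) (hg : LinearIndependent K g) :
    ∃ h : Fin n → L, rankWeight K h = n ∧
      dualCode (gab K L k g) = gab K L (n - k) h := by
  classical
  obtain ⟨m, rfl⟩ : ∃ m, n = m + 1 := ⟨n - 1, by omega⟩
  have hq1 : 1 < Fintype.card K := Fintype.one_lt_card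
  haveI : Finite L := Module.finite_of_finite K
  -- full Moore independence
  have Mfull : LinearIndependent L
      (fun i : Fin (m + 1) => fun j : Fin (m + 1) => g j ^ Fintype.card K ^ (i : ℕ)) :=
    moore_li K (m + 1) le_rfl g hg
  -- the span of the first m Moore rows
  set W : Submodule L (Fin (m + 1) → L) :=
    span L (Set.range fun i : Fin m => fun j : Fin (m + 1) => g j ^ Fintype.card K ^ (i : ℕ))
    with Wdef
  have hfW : finrank L W = m := by
    rw [Wdef, finrank_span_eq_card (moore_li K m (by omega) g hg), Fintype.card_fin]
  have hfO : finrank L ((stdB L (Fin (m + 1))).orthogonal W) = 1 := by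
    rw [LinearMap.BilinForm.finrank_orthogonal stdB_nondeg,
      Module.finrank_fin_fun, hfW]
    omega
  have hObot : (stdB L (Fin (m + 1))).orthogonal W ≠ ⊥ := by
    intro hbot
    rw [hbot, finrank_bot] at hfO
    omega
  obtain ⟨u, huW, hu0⟩ := (Submodule.ne_bot_iff _).mp hObot
  have hBu : ∀ r : ℕ, r < m → ∑ j, g j ^ Fintype.card K ^ r * u j = 0 := by
    intro r hr
    have hmem : (fun j : Fin (m + 1) => g j ^ Fintype.card K ^ r) ∈ W :=
      Submodule.subset_span ⟨⟨r, hr⟩, rfl⟩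
    have := LinearMap.BilinForm.mem_orthogonal_iff.mp huW _ hmem
    rwa [stdB_apply] at this
  -- construct h
  have hinj : Function.Injective (fun x : L => x ^ Fintype.card K ^ (m + 1 - k - 1)) := by
    obtain ⟨f, hf⟩ := exists_qpow K (L := L) (m + 1 - k - 1)
    have hfe : (fun x : L => x ^ Fintype.card K ^ (m + 1 - k - 1)) = f :=
      funext fun x => (hf x).symm
    rw [hfe]
    exact f.injective
  have hsurj : Function.Surjective (fun x : L => x ^ Fintype.card K ^ (m + 1 - k - 1)) :=
    (Finite.injective_iff_surjective).mp hinj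
  set h : Fin (m + 1) → L := fun j => Function.surjInv hsurj (u j) with hdef
  have hh : ∀ j, h j ^ Fintype.card K ^ (m + 1 - k - 1) = u j :=
    fun j => Function.surjInv_eq hsurj (u j)
  -- key orthogonality
  have key : ∀ i s : ℕ, i < k → s < m + 1 - k →
      ∑ j, g j ^ Fintype.card K ^ i * h j ^ Fintype.card K ^ s = 0 := by
    intro i s hi hs
    obtain ⟨f, hf⟩ := exists_qpow K (L := L) (m + 1 - k - 1 - s)
    apply f.injective
    rw [map_sum, map_zero]
    have hterm : ∀ j, f (g j ^ Fintype.card K ^ i * h j ^ Fintype.card K ^ s)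
        = g j ^ Fintype.card K ^ (i + (m + 1 - k - 1 - s)) * u j := by
      intro j
      rw [map_mul, hf, hf, ← pow_mul, ← pow_mul, ← pow_add, ← pow_add]
      rw [show s + (m + 1 - k - 1 - s) = m + 1 - k - 1 by omega, hh j]
    rw [Finset.sum_congr rfl fun j _ => hterm j]
    exact hBu _ (by omega)
  -- u is K-linearly independent
  have hulin : LinearIndependent K u := by
    rw [Fintype.linearIndependent_iff]
    intro c hc j₀
    by_contra hcj
    set c' : Fin (m + 1) → L := fun j => algebraMap K L (c j) with c'def
    have hc'0 : c' ≠ 0 := by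
      intro h0
      apply hcj
      have h1 := congrFun h0 j₀
      rw [c'def] at h1
      exact (algebraMap K L).injective (by simpa using h1)
    have hBc'u : ∑ j, c' j * u j = 0 := by
      calc ∑ j, c' j * u j = ∑ j, c j • u j :=
            Finset.sum_congr rfl fun j _ => (Algebra.smul_def _ _).symm
        _ = 0 := hc
    have hc'W : c' ∉ W := by
      intro hmem
      rw [Wdef, mem_span_range_iff_exists_fun] at hmem
      obtain ⟨lam, hlam⟩ := hmem
      set a : ℕ → L := fun r => if hr : r < m then lam ⟨r, hr⟩ else 0 with adef
      have hai : ∀ i : Fin m, a (i : ℕ) = lam i := by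
        intro i
        rw [adef]
        simp only [i.isLt, dif_pos]
      obtain ⟨f1, hf1⟩ := exists_qpow K (L := L) 1
      have heq1 : ∑ r ∈ Finset.range m,
          (a r • fun j : Fin (m + 1) => g j ^ Fintype.card K ^ r) = c' := by
        rw [← Fin.sum_univ_eq_sum_range
          (fun r => a r • fun j : Fin (m + 1) => g j ^ Fintype.card K ^ r) m, ← hlam]
        exact Finset.sum_congr rfl fun i _ => by rw [hai i]
      have heq2 : ∑ r ∈ Finset.range m,
          (f1 (a r) • fun j : Fin (m + 1) => g j ^ Fintype.card K ^ (r + 1)) = c' := by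
        funext j
        have hj := congrFun heq1 j
        rw [Finset.sum_apply] at hj
        simp only [Pi.smul_apply, smul_eq_mul] at hj
        rw [Finset.sum_apply]
        simp only [Pi.smul_apply, smul_eq_mul]
        have hterm : ∀ r ∈ Finset.range m,
            f1 (a r) * g j ^ Fintype.card K ^ (r + 1)
              = f1 (a r * g j ^ Fintype.card K ^ r) := by
          intro r _
          rw [map_mul]
          congr 1
          rw [hf1, ← pow_mul, pow_one, ← pow_succ]
        rw [Finset.sum_congr rfl hterm, ← map_sum, hj]
        show f1 (algebraMap K L (c j)) = algebraMap K L (c j)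
        rw [hf1, qpow_algebraMap]
      set b : ℕ → L := fun r => a r - (if r = 0 then 0 else f1 (a (r - 1))) with bdef
      have heq3 : ∑ r ∈ Finset.range (m + 1),
          (b r • fun j : Fin (m + 1) => g j ^ Fintype.card K ^ r) = 0 := by
        have hsub : ∀ r ∈ Finset.range (m + 1),
            (b r • fun j : Fin (m + 1) => g j ^ Fintype.card K ^ r)
              = (a r • fun j : Fin (m + 1) => g j ^ Fintype.card K ^ r)
                - ((if r = 0 then 0 else f1 (a (r - 1)))
                    • fun j : Fin (m + 1) => g j ^ Fintype.card K ^ r) := by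
          intro r _
          rw [bdef, sub_smul]
        rw [Finset.sum_congr rfl hsub, Finset.sum_sub_distrib]
        have h1 : ∑ r ∈ Finset.range (m + 1),
            (a r • fun j : Fin (m + 1) => g j ^ Fintype.card K ^ r) = c' := by
          rw [Finset.sum_range_succ]
          have ham : a m = 0 := by rw [adef]; simp
          rw [ham, zero_smul, add_zero, heq1]
        have h2 : ∑ r ∈ Finset.range (m + 1),
            ((if r = 0 then 0 else f1 (a (r - 1)))
              • fun j : Fin (m + 1) => g j ^ Fintype.card K ^ r) = c' := by
          rw [Finset.sum_range_succ']
          have hFs : ∀ i ∈ Finset.range m,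
              ((if (i + 1) = 0 then (0 : L) else f1 (a (i + 1 - 1)))
                • fun j : Fin (m + 1) => g j ^ Fintype.card K ^ (i + 1))
              = (f1 (a i) • fun j : Fin (m + 1) => g j ^ Fintype.card K ^ (i + 1)) := by
            intro i _
            simp
          rw [Finset.sum_congr rfl hFs, heq2]
          simp
        rw [h1, h2, sub_self]
      have hball : ∀ i : Fin (m + 1), b (i : ℕ) = 0 := by
        apply Fintype.linearIndependent_iff.mp Mfull (fun i : Fin (m + 1) => b (i : ℕ))
        rw [Fin.sum_univ_eq_sum_range
          (fun r => b r • fun j : Fin (m + 1) => g j ^ Fintype.card K ^ r) (m + 1)]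
        exact heq3
      have ha0 : ∀ r, r ≤ m → a r = 0 := by
        intro r
        induction r with
        | zero =>
            intro _
            have h0 := hball ⟨0, by omega⟩
            rw [bdef] at h0
            simpa using h0
        | succ r ih =>
            intro hr
            have hs := hball ⟨r + 1, by omega⟩
            rw [bdef] at hs
            simp only [Nat.succ_ne_zero, if_false, Nat.add_sub_cancel] at hs
            rw [ih (by omega), map_zero, sub_zero] at hs
            exact hs
      apply hc'0
      rw [← hlam]
      refine Finset.sum_eq_zero fun i _ => ?_
      have hli : lam i = 0 := by
        rw [← hai i]
        exact ha0 _ (le_of_lt i.isLt)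
      rw [hli, zero_smul]
    -- now derive that u = 0, a contradiction
    have hinf : W ⊓ (L ∙ c') = ⊥ := by
      rw [eq_bot_iff]
      intro x hx
      obtain ⟨hxW, hxc⟩ := Submodule.mem_inf.mp hx
      rw [Submodule.mem_span_singleton] at hxc
      obtain ⟨aa, rfl⟩ := hxc
      rcases eq_or_ne aa 0 with rfl | hne
      · simp
      · exfalso
        apply hc'W
        have := W.smul_mem aa⁻¹ hxW
        rwa [smul_smul, inv_mul_cancel₀ hne, one_smul] at this
    have hW' : W ⊔ (L ∙ c') = ⊤ := by
      apply Submodule.eq_top_of_finrank_eq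
      have hsum := Submodule.finrank_sup_add_finrank_inf_eq W (L ∙ c')
      rw [hinf, finrank_bot, finrank_span_singleton hc'0, hfW, add_zero] at hsum
      rw [Module.finrank_fin_fun]
      omega
    have hall : ∀ w : Fin (m + 1) → L, stdB L (Fin (m + 1)) w u = 0 := by
      have hle : W ⊔ (L ∙ c') ≤ LinearMap.ker ((stdB L (Fin (m + 1))).flip u) := by
        refine sup_le ?_ ?_
        · intro w hw
          rw [LinearMap.mem_ker, stdB_flip_apply]
          have := LinearMap.BilinForm.mem_orthogonal_iff.mp huW _ hw
          exact this
        · rw [Submodule.span_singleton_le_iff_mem, LinearMap.mem_ker, stdB_flip_apply,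
            stdB_apply]
          exact hBc'u
      intro w
      have hw : w ∈ LinearMap.ker ((stdB L (Fin (m + 1))).flip u) :=
        hle (hW' ▸ Submodule.mem_top)
      rw [LinearMap.mem_ker, stdB_flip_apply] at hw
      exact hw
    apply hu0
    funext j
    have := hall (Pi.single j 1)
    rw [stdB_apply] at this
    simpa [Pi.single_apply, mul_ite, Finset.sum_ite_eq] using this
  -- h is K-linearly independent
  have hhlin : LinearIndependent K h := by
    rw [Fintype.linearIndependent_iff]
    intro c hc
    apply Fintype.linearIndependent_iff.mp hulin c
    obtain ⟨f, hf⟩ := exists_qpow K (L := L) (m + 1 - k - 1)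
    have := congrArg f hc
    rw [map_zero, map_sum] at this
    calc ∑ j, c j • u j = ∑ j, f (c j • h j) := by
          refine Finset.sum_congr rfl fun j _ => ?_
          rw [Algebra.smul_def, Algebra.smul_def, map_mul, hf, hf, qpow_algebraMap, hh j]
      _ = 0 := this
  refine ⟨h, ?_, ?_⟩
  · unfold rankWeight
    rw [finrank_span_eq_card hhlin, Fintype.card_fin]
  · -- duality
    have hle : gab K L (m + 1 - k) h ≤ dualCode (gab K L k g) := by
      rw [dualCode_eq_orth]
      unfold gab
      refine Submodule.span_le.mpr ?_
      rintro x ⟨s, rfl⟩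
      rw [SetLike.mem_coe, LinearMap.BilinForm.mem_orthogonal_iff]
      intro w hw
      have hker : span L (Set.range fun i : Fin k => fun j => g j ^ Fintype.card K ^ (i : ℕ))
          ≤ LinearMap.ker ((stdB L (Fin (m + 1))).flip
              (fun j => h j ^ Fintype.card K ^ (s : ℕ))) := by
        refine Submodule.span_le.mpr ?_
        rintro y ⟨i, rfl⟩
        rw [SetLike.mem_coe, LinearMap.mem_ker]
        show stdB L (Fin (m + 1)) (fun j => g j ^ Fintype.card K ^ (i : ℕ))
          (fun j => h j ^ Fintype.card K ^ (s : ℕ)) = 0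
        rw [stdB_apply]
        exact key (i : ℕ) (s : ℕ) i.isLt s.isLt
      have h2 := hker hw
      rw [LinearMap.mem_ker, stdB_flip_apply] at h2
      exact h2
    have hrk : finrank L (dualCode (gab K L k g)) = m + 1 - k := by
      rw [finrank_dualCode]
      unfold gab
      rw [finrank_span_eq_card (moore_li K k (by omega) g hg), Fintype.card_fin]
    have hrh : finrank L (gab K L (m + 1 - k) h) = m + 1 - k := by
      unfold gab
      rw [finrank_span_eq_card (moore_li K (m + 1 - k) (by omega) h hhlin), Fintype.card_fin]
    exact (Submodule.eq_of_le_of_finrank_le hle (by rw [hrk, hrh])).symm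
end
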